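/- For any positive integers N and g, there exists a connected finite simple graph G with difference index D(G) = 2, sum index S(G) ≥ N, and girth at least g. Consequently, the sum index cannot be bounded above by any function of the difference index, even for connected graphs. -/

import Mathlib

/-!
Let `L ≥ 3` be odd. On the vertices `0, …, ML - 1` take the path `a — a + 1` together with the
chords `tL — tL + L - 1`, which close each block of `L` consecutive vertices into an `L`-cycle;
consecutive cycles are joined by a path edge. Labelling each vertex by itself, every edge has
difference `1` or `L - 1`, while at a vertex of maximal label two distinct neighbours give two
distinct differences, so `D = 2`.

On an odd cycle the edge sums determine the labels: their alternating sum is twice the label of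
the first vertex. Hence for an injective labelling with edge-sum set `S`, the `M` blocks yield `M`
distinct tuples in `S ^ L`, and `M ≤ |S| ^ L`; taking `M = (N + 1) ^ L` gives `S ≥ N + 1`.

A closed trail crosses every cut `{x ≤ c}` an even number of times. The cut after a block is
crossed by a single edge, so no cycle joins two blocks, and the cut after the `i`-th vertex of
block `t` (`i < L - 1`) is crossed exactly by the step edge there and the chord of block `t`. So a
cycle contains a chord and then every edge of its block: it has length at least `L`.
-/

open SimpleGraph

noncomputable def sumIndex {V : Type*} [Fintype V] (G : SimpleGraph V) : ℕ :=
  sInf {n | ∃ f : V → ℤ, Function.Injective f ∧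
    {s : ℤ | ∃ u v, G.Adj u v ∧ s = f u + f v}.ncard = n}

noncomputable def diffIndex {V : Type*} [Fintype V] (G : SimpleGraph V) : ℕ :=
  sInf {n | ∃ f : V → ℤ, Function.Injective f ∧
    {s : ℤ | ∃ u v, G.Adj u v ∧ s = |f u - f v|}.ncard = n}

open Finset

theorem SimpleGraph.Walk.even_countP_darts_iff {V : Type*} {G : SimpleGraph V} (p : V → Bool)
    {u v : V} (w : G.Walk u v) :
    Even (w.darts.countP fun d => decide (p d.fst ≠ p d.snd)) ↔ p u = p v := by
  induction w with
  | nil => simp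
  | @cons u x v h w ih =>
    rw [darts_cons, List.countP_cons]
    cases hu : p u <;> cases hx : p x <;> cases hv : p v <;> simp_all [Nat.even_add_one]

theorem SimpleGraph.Walk.IsTrail.even_card_filter_mem_edges {V : Type*} [DecidableEq V]
    {G : SimpleGraph V} {u : V} {w : G.Walk u u} (hw : w.IsTrail) (p : V → Bool)
    {C : Finset (Sym2 V)} (hC : ∀ d : G.Dart, p d.fst ≠ p d.snd ↔ d.edge ∈ C) :
    Even (C.filter (· ∈ w.edges)).card := by
  have hcount :
      w.darts.countP (fun d => decide (p d.fst ≠ p d.snd)) = w.edges.countP (· ∈ C) := by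
    rw [Walk.edges, List.countP_map]
    congr 1
    funext d
    simp [← hC d]
  have hfilter : C.filter (· ∈ w.edges) = (w.edges.filter (· ∈ C)).toFinset := by
    ext e
    simp [and_comm]
  rw [hfilter, List.toFinset_card_of_nodup (hw.edges_nodup.filter _),
    ← List.countP_eq_length_filter, ← hcount]
  exact (w.even_countP_darts_iff p).2 rfl

theorem SimpleGraph.finite_setOf_exists_adj {V β : Type*} [Finite V] (G : SimpleGraph V)
    (φ : V → V → β) : {s | ∃ u v, G.Adj u v ∧ s = φ u v}.Finite :=
  (Set.finite_range fun p : V × V => φ p.1 p.2).subset fun _ ⟨u, v, _, hs⟩ => ⟨(u, v), hs.symm⟩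

theorem Finset.sum_range_neg_one_pow_mul_add {R : Type*} [CommRing R] (x : ℕ → R) (n : ℕ) :
    ∑ i ∈ range n, (-1) ^ i * (x i + x (i + 1)) = x 0 - (-1) ^ n * x n := by
  induction n with
  | zero => simp
  | succ n ih => rw [sum_range_succ, ih, pow_succ]; ring

theorem Fintype.card_le_ncard_pow_of_injective {α ι β : Type*} [Fintype α] [Fintype ι]
    [DecidableEq ι] [DecidableEq β] {S : Set β} (hS : S.Finite) (Φ : α → ι → β)
    (hΦ : Function.Injective Φ) (hmem : ∀ a i, Φ a i ∈ S) :
    Fintype.card α ≤ S.ncard ^ Fintype.card ι := by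
  have hsub : univ.image Φ ⊆ Fintype.piFinset fun _ => hS.toFinset := by
    intro φ hφ
    obtain ⟨a, -, rfl⟩ := mem_image.1 hφ
    simpa using hmem a
  calc Fintype.card α = (univ.image Φ).card := (card_image_of_injective _ hΦ).symm
    _ ≤ (Fintype.piFinset fun _ => hS.toFinset).card := card_le_card hsub
    _ = S.ncard ^ Fintype.card ι := by
      rw [Fintype.card_piFinset, prod_const, Set.ncard_eq_toFinset_card S hS, card_univ]

theorem Nat.eq_div_of_mul_le_of_lt {t L c : ℕ} (h₁ : t * L ≤ c) (h₂ : c < t * L + L) :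
    t = c / L :=
  (Nat.div_eq_of_lt_le h₁ (by rwa [add_one_mul])).symm

lemma exists_injective_int (V : Type*) [Finite V] : ∃ f : V → ℤ, Function.Injective f := by
  obtain ⟨n, ⟨e⟩⟩ := Finite.exists_equiv_fin V
  exact ⟨fun v => (e v : ℕ), Nat.cast_injective.comp (Fin.val_injective.comp e.injective)⟩

section Indices

variable {V : Type*} [Fintype V] {G : SimpleGraph V}

lemma le_sumIndex {k : ℕ} (h : ∀ f : V → ℤ, Function.Injective f →
    k ≤ {s : ℤ | ∃ u v, G.Adj u v ∧ s = f u + f v}.ncard) : k ≤ sumIndex G :=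
  have ⟨f, hf⟩ := exists_injective_int V
  le_csInf ⟨_, f, hf, rfl⟩ fun _ ⟨f, hf, hn⟩ => hn ▸ h f hf

lemma le_diffIndex {k : ℕ} (h : ∀ f : V → ℤ, Function.Injective f →
    k ≤ {s : ℤ | ∃ u v, G.Adj u v ∧ s = |f u - f v|}.ncard) : k ≤ diffIndex G :=
  have ⟨f, hf⟩ := exists_injective_int V
  le_csInf ⟨_, f, hf, rfl⟩ fun _ ⟨f, hf, hn⟩ => hn ▸ h f hf

lemma diffIndex_le {f : V → ℤ} (hf : Function.Injective f) :
    diffIndex G ≤ {s : ℤ | ∃ u v, G.Adj u v ∧ s = |f u - f v|}.ncard :=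
  Nat.sInf_le ⟨f, hf, rfl⟩

end Indices

theorem two_le_ncard_abs_sub {V : Type*} [Finite V] [Nonempty V] {G : SimpleGraph V}
    (h : ∀ v, ∃ a b, a ≠ b ∧ G.Adj v a ∧ G.Adj v b) {f : V → ℤ} (hf : Function.Injective f) :
    2 ≤ {s : ℤ | ∃ u v, G.Adj u v ∧ s = |f u - f v|}.ncard := by
  obtain ⟨v, hv⟩ := Finite.exists_max f
  obtain ⟨a, b, hab, ha, hb⟩ := h v
  have hlt : ∀ x, G.Adj v x → f x < f v := fun x hx => (hv x).lt_of_ne (hf.ne hx.ne')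
  refine (Set.one_lt_ncard_iff (G.finite_setOf_exists_adj _)).2
    ⟨_, _, ⟨v, a, ha, rfl⟩, ⟨v, b, hb, rfl⟩, ?_⟩
  rw [abs_of_pos (sub_pos.2 (hlt a ha)), abs_of_pos (sub_pos.2 (hlt b hb))]
  exact fun h => hab (hf (by linarith))

def chainGraph (L : ℕ) : SimpleGraph ℕ :=
  SimpleGraph.fromRel fun a b => b = a + 1 ∨ ∃ t, a = t * L ∧ b = t * L + (L - 1)

def chord (L t : ℕ) : Sym2 ℕ := s(t * L, t * L + (L - 1))

section ChainGraph

variable {L : ℕ}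

lemma chainGraph_adj {a b : ℕ} :
    (chainGraph L).Adj a b ↔ a ≠ b ∧ (b = a + 1 ∨ a = b + 1 ∨ ∃ t, s(a, b) = chord L t) := by
  simp only [chainGraph, fromRel_adj, chord, Sym2.eq_iff]
  constructor
  · rintro ⟨hab, (h | ⟨t, h⟩) | (h | ⟨t, h⟩)⟩ <;> grind
  · rintro ⟨hab, h | h | ⟨t, h | h⟩⟩ <;> grind

lemma chainGraph_adj_of_add_one_eq {a b : ℕ} (h : a + 1 = b) : (chainGraph L).Adj a b :=
  chainGraph_adj.2 ⟨by omega, Or.inl h.symm⟩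

lemma chainGraph_adj_of_eq_chord (hL : 2 ≤ L) {a b t : ℕ} (ha : a = t * L)
    (hb : b = t * L + (L - 1)) : (chainGraph L).Adj a b :=
  chainGraph_adj.2 ⟨by omega, Or.inr (Or.inr ⟨t, by rw [ha, hb, chord]⟩)⟩

lemma chainGraph_adj_mod (hL : 2 ≤ L) (t : ℕ) {i : ℕ} (hi : i < L) :
    (chainGraph L).Adj (t * L + i % L) (t * L + (i + 1) % L) := by
  rw [Nat.mod_eq_of_lt hi]
  rcases Nat.lt_or_ge (i + 1) L with hi' | hi'
  · exact chainGraph_adj_of_add_one_eq (by rw [Nat.mod_eq_of_lt hi']; omega)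
  · rw [show i + 1 = L by omega, Nat.mod_self]
    exact (chainGraph_adj_of_eq_chord (t := t) hL (by omega) (by omega)).symm

lemma chainGraph_cross_iff {a b c : ℕ} (h : (chainGraph L).Adj a b) :
    decide (a ≤ c) ≠ decide (b ≤ c) ↔
      s(a, b) = s(c, c + 1) ∨ ∃ t, t * L ≤ c ∧ c + 1 < t * L + L ∧ s(a, b) = chord L t := by
  rw [chainGraph_adj] at h
  simp only [chord, Sym2.eq_iff, ne_eq, decide_eq_decide] at h ⊢
  obtain ⟨hab, h | h | ⟨t, h | h⟩⟩ := h
  all_goals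
    constructor
    · intro hc
      first
        | (left; omega)
        | (right; exact ⟨t, by omega, by omega, by omega⟩)
    · rintro (h' | ⟨t', h₁, h₂, h' | h'⟩) <;> omega

lemma chainGraph_cross_iff_of_lt {t i : ℕ} (hi : i + 1 < L) (d : (chainGraph L).Dart) :
    decide (d.fst ≤ t * L + i) ≠ decide (d.snd ≤ t * L + i) ↔
      d.edge ∈ ({s(t * L + i, t * L + i + 1), chord L t} : Finset (Sym2 ℕ)) := by
  rw [chainGraph_cross_iff d.adj, mem_insert, mem_singleton]
  refine or_congr Iff.rfl ⟨fun ⟨t', h₁, h₂, h⟩ => ?_, fun h => ⟨t, by omega, by omega, h⟩⟩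
  rwa [Nat.eq_div_of_mul_le_of_lt (t := t) (L := L) (c := t * L + i) (by omega) (by omega),
    ← Nat.eq_div_of_mul_le_of_lt h₁ (by omega)]

lemma chainGraph_cross_iff_of_top {t : ℕ} (d : (chainGraph L).Dart) :
    decide (d.fst ≤ t * L + (L - 1)) ≠ decide (d.snd ≤ t * L + (L - 1)) ↔
      d.edge ∈ ({s(t * L + (L - 1), t * L + (L - 1) + 1)} : Finset (Sym2 ℕ)) := by
  rw [chainGraph_cross_iff d.adj, mem_singleton]
  refine or_iff_left_of_imp fun ⟨t', h₁, h₂, _⟩ => ?_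
  have := Nat.eq_div_of_mul_le_of_lt h₁ (by omega)
  rw [← Nat.eq_div_of_mul_le_of_lt (t := t) (L := L) (c := t * L + (L - 1)) (by omega)
    (by omega)] at this
  subst this
  omega

section Cycles

variable {u : ℕ} {w : (chainGraph L).Walk u u}

lemma chainGraph_step_mem_edges_iff (hL : 3 ≤ L) (hw : w.IsTrail) {t i : ℕ} (hi : i + 1 < L) :
    s(t * L + i, t * L + i + 1) ∈ w.edges ↔ chord L t ∈ w.edges := by
  have hne : s(t * L + i, t * L + i + 1) ≠ chord L t := by
    simp only [chord, ne_eq, Sym2.eq_iff]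
    omega
  have := hw.even_card_filter_mem_edges (fun x => decide (x ≤ t * L + i))
    (chainGraph_cross_iff_of_lt hi)
  rw [filter_insert, filter_singleton] at this
  by_cases h₁ : s(t * L + i, t * L + i + 1) ∈ w.edges <;> by_cases h₂ : chord L t ∈ w.edges <;>
    simp_all

lemma chainGraph_step_top_notMem_edges (hw : w.IsTrail) (t : ℕ) :
    s(t * L + (L - 1), t * L + (L - 1) + 1) ∉ w.edges := by
  have := hw.even_card_filter_mem_edges (fun x => decide (x ≤ t * L + (L - 1)))
    chainGraph_cross_iff_of_top
  rw [filter_singleton] at this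
  split_ifs at this with h
  · simp at this
  · exact h

lemma chainGraph_exists_chord_mem_edges (hL : 3 ≤ L) (hw : w.IsCycle) :
    ∃ t, chord L t ∈ w.edges := by
  have hstep : ∀ a, s(a, a + 1) ∈ w.edges → chord L (a / L) ∈ w.edges := by
    intro a ha
    have hdiv := Nat.div_add_mod' a L
    have hmod := Nat.mod_lt a (show 0 < L by omega)
    rcases Nat.lt_or_ge (a % L + 1) L with hi | hi
    · rw [← hdiv] at ha
      exact (chainGraph_step_mem_edges_iff hL hw.isTrail hi).1 ha
    · rw [← hdiv, show a % L = L - 1 by omega] at ha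
      exact absurd ha (chainGraph_step_top_notMem_edges hw.isTrail _)
  obtain ⟨e, he⟩ := List.exists_mem_of_ne_nil w.edges (List.ne_nil_of_length_pos
    (by rw [Walk.length_edges]; have := hw.three_le_length; omega))
  induction e using Sym2.ind with
  | h a b =>
    obtain ⟨-, rfl | rfl | ⟨t, ht⟩⟩ := chainGraph_adj.1 (w.adj_of_mem_edges he)
    · exact ⟨_, hstep a he⟩
    · exact ⟨_, hstep b (Sym2.eq_swap ▸ he)⟩
    · exact ⟨t, ht ▸ he⟩

end Cycles

theorem chainGraph_egirth (hL : 3 ≤ L) : (L : ℕ∞) ≤ (chainGraph L).egirth := by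
  rw [le_egirth]
  intro u w hw
  obtain ⟨t, ht⟩ := chainGraph_exists_chord_mem_edges hL hw
  set steps := (range (L - 1)).image fun i => s(t * L + i, t * L + i + 1)
  have hsub : insert (chord L t) steps ⊆ w.edges.toFinset := by
    intro e he
    simp only [mem_insert, mem_image, mem_range, steps] at he
    rw [List.mem_toFinset]
    obtain rfl | ⟨i, hi, rfl⟩ := he
    · exact ht
    · exact (chainGraph_step_mem_edges_iff hL hw.isTrail (by omega)).2 ht
  have hcard : (insert (chord L t) steps).card = L := by
    rw [card_insert_of_notMem, card_image_of_injective, card_range]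
    · omega
    · intro i j h
      simp only [Sym2.eq_iff] at h
      omega
    · simp only [steps, chord, mem_image, mem_range, Sym2.eq_iff, not_exists]
      omega
  calc (L : ℕ∞) = (insert (chord L t) steps).card := by rw [hcard]
    _ ≤ w.edges.toFinset.card := by exact_mod_cast card_le_card hsub
    _ ≤ w.length := by exact_mod_cast w.length_edges ▸ List.toFinset_card_le _

def finChainGraph (L n : ℕ) : SimpleGraph (Fin n) := (chainGraph L).comap Fin.val

lemma finChainGraph_adj {n : ℕ} {a b : Fin n} :
    (finChainGraph L n).Adj a b ↔ (chainGraph L).Adj a b := Iff.rfl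

lemma finChainGraph_connected {n : ℕ} (hn : 0 < n) : (finChainGraph L n).Connected := by
  have hle : pathGraph n ≤ finChainGraph L n := fun a b h => by
    rw [pathGraph_adj] at h
    rw [finChainGraph_adj, chainGraph_adj]
    omega
  exact (connected_iff _).2 ⟨(pathGraph_preconnected n).mono hle, ⟨⟨0, hn⟩⟩⟩

lemma finChainGraph_egirth (hL : 3 ≤ L) (n : ℕ) : (L : ℕ∞) ≤ (finChainGraph L n).egirth :=
  (chainGraph_egirth hL).trans
    (Embedding.comap Fin.valEmbedding (chainGraph L)).isContained.egirth_le

lemma finChainGraph_exists_two_adj (hL : 3 ≤ L) {M : ℕ} (v : Fin (M * L)) :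
    ∃ a b, a ≠ b ∧ (finChainGraph L (M * L)).Adj v a ∧ (finChainGraph L (M * L)).Adj v b := by
  obtain ⟨c, hc⟩ := v
  set t := c / L
  have hdiv : t * L + c % L = c := Nat.div_add_mod' c L
  have hmod : c % L < L := Nat.mod_lt c (by omega)
  have hblock : t * L + L ≤ M * L := by
    have : t < M := Nat.div_lt_of_lt_mul (by rwa [mul_comm])
    nlinarith
  simp only [ne_eq, Fin.ext_iff, finChainGraph_adj]
  rcases Nat.eq_zero_or_pos (c % L) with h0 | h0
  · exact ⟨⟨c + 1, by omega⟩, ⟨c + (L - 1), by omega⟩, by simp only; omega,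
      chainGraph_adj_of_add_one_eq rfl,
      chainGraph_adj_of_eq_chord (t := t) (by omega) (by omega) (by simp only; omega)⟩
  rcases Nat.lt_or_ge (c % L + 1) L with htop | htop
  · exact ⟨⟨c - 1, by omega⟩, ⟨c + 1, by omega⟩, by simp only; omega,
      (chainGraph_adj_of_add_one_eq (by simp only; omega)).symm, chainGraph_adj_of_add_one_eq rfl⟩
  · exact ⟨⟨c - 1, by omega⟩, ⟨c - (L - 1), by omega⟩, by simp only; omega,
      (chainGraph_adj_of_add_one_eq (by simp only; omega)).symm,
      (chainGraph_adj_of_eq_chord (t := t) (by omega) (by simp only; omega) (by omega)).symm⟩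

lemma finChainGraph_diffIndex (hL : 3 ≤ L) {M : ℕ} (hM : 0 < M) :
    diffIndex (finChainGraph L (M * L)) = 2 := by
  have : Nonempty (Fin (M * L)) := ⟨⟨0, by positivity⟩⟩
  refine le_antisymm ?_
    (le_diffIndex fun f hf => two_le_ncard_abs_sub (finChainGraph_exists_two_adj hL) hf)
  refine (diffIndex_le (Nat.cast_injective.comp Fin.val_injective)).trans ?_
  refine (Set.ncard_le_ncard (t := {1, (L : ℤ) - 1}) ?_).trans (Set.ncard_pair (by omega)).le
  rintro s ⟨u, v, h, rfl⟩
  rw [Set.mem_insert_iff, Set.mem_singleton_iff, Function.comp_apply, Function.comp_apply]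
  simp only [finChainGraph_adj, chainGraph_adj, chord, Sym2.eq_iff] at h
  obtain ⟨-, h | h | ⟨t, h | h⟩⟩ := h <;>
    rcases abs_cases ((u : ℕ) - (v : ℕ) : ℤ) with ⟨habs, _⟩ | ⟨habs, _⟩ <;> rw [habs] <;> omega

lemma finChainGraph_le_ncard_sums_pow (hL : 3 ≤ L) (hodd : Odd L) {M : ℕ}
    {f : Fin (M * L) → ℤ} (hf : Function.Injective f) :
    M ≤ {s : ℤ | ∃ u v, (finChainGraph L (M * L)).Adj u v ∧ s = f u + f v}.ncard ^ L := by
  classical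
  have hlt : ∀ t : Fin M, ∀ j < L, (t : ℕ) * L + j < M * L := fun t j hj => by
    nlinarith [t.isLt]
  let x (t : Fin M) (j : ℕ) : Fin (M * L) := ⟨t * L + j % L, hlt t _ (Nat.mod_lt _ (by omega))⟩
  let Φ (t : Fin M) (i : Fin L) : ℤ := f (x t i) + f (x t (i + 1))
  have hΦ : ∀ t, ∑ i : Fin L, (-1) ^ (i : ℕ) * Φ t i = 2 * f (x t 0) := by
    intro t
    have hper : x t L = x t 0 := by simp [x]
    rw [Fin.sum_univ_eq_sum_range (fun i => (-1) ^ i * (f (x t i) + f (x t (i + 1)))),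
      sum_range_neg_one_pow_mul_add, hodd.neg_one_pow, hper]
    ring
  have hinj : Function.Injective Φ := by
    intro t t' h
    have h0 : x t 0 = x t' 0 := hf (by linarith [hΦ t, hΦ t', h ▸ hΦ t])
    simp only [x, Fin.mk.injEq, Nat.zero_mod, add_zero] at h0
    exact Fin.ext (Nat.eq_of_mul_eq_mul_right (by omega) h0)
  simpa using Fintype.card_le_ncard_pow_of_injective (finite_setOf_exists_adj _ _) Φ hinj
    fun t i => ⟨x t i, x t (i + 1), chainGraph_adj_mod (by omega) t i.isLt, rfl⟩

end ChainGraph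

theorem stmt4 (N g : ℕ) :
    ∃ (V : Type) (_ : Fintype V) (G : SimpleGraph V),
      G.Connected ∧ diffIndex G = 2 ∧ N ≤ sumIndex G ∧ (g : ℕ∞) ≤ G.egirth := by
  set L := 2 * g + 3
  have hL : 3 ≤ L := by omega
  have hodd : Odd L := ⟨g + 1, by omega⟩
  set M := (N + 1) ^ L
  have hM : 0 < M := by positivity
  refine ⟨Fin (M * L), inferInstance, finChainGraph L (M * L),
    finChainGraph_connected (by positivity), finChainGraph_diffIndex hL hM, ?_, ?_⟩
  · refine le_sumIndex fun f hf => ?_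
    exact Nat.le_of_succ_le
      ((Nat.pow_le_pow_iff_left (by omega)).1 (finChainGraph_le_ncard_sums_pow hL hodd hf))
  · exact le_trans (by exact_mod_cast (by omega : g ≤ L)) (finChainGraph_egirth hL _)
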